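/- For the ball-and-cell game with 3 balls and 3 cells, the probability generating function of the duration is F(x) = 2x(5x+3)/((3−x)(9−x)). -/

import Mathlib

open MeasureTheory ProbabilityTheory Finset

/-- One round of the Dym–Luks ball-and-cell game: given the set `S` of remaining balls and a
placement `f` of the balls into the `n` cells, the balls remaining afterwards are those
members of `S` that are not sole occupants of their cell (sole occupants are captured). -/
def remainingBalls (r n : ℕ) (S : Finset (Fin r)) (f : Fin r → Fin n) : Finset (Fin r) :=
  S.filter (fun b => ∃ b' ∈ S, b' ≠ b ∧ f b' = f b)

/-- The set of balls still in play after `k` rounds, starting from `r` balls, where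
`ω k : Fin r → Fin n` is the placement of the balls used in round `k`. -/
def gameState (r n : ℕ) (ω : ℕ → Fin r → Fin n) : ℕ → Finset (Fin r)
  | 0 => Finset.univ
  | k + 1 => remainingBalls r n (gameState r n ω k) (ω k)

/-- The duration of the game: the first time at which no balls remain. -/
noncomputable def gameDuration (r n : ℕ) (ω : ℕ → Fin r → Fin n) : ℕ :=
  sInf {k | gameState r n ω k = ∅}

/-! The set of surviving balls after `k` rounds is determined by the first `k` placements, hence
independent of placement `k`; so it evolves as a Markov chain whose transition `S → T` has
probability `#{f | remainingBalls S f = T} / 27`. No round leaves exactly one ball. From the full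
set the chain stays put with probability `3/27` and moves to a given pair with probability `6/27`;
a pair stays put with probability `9/27`. Hence all three balls survive `k` rounds with probability
`9⁻ᵏ`, a given pair with probability `3⁻ᵏ - 9⁻ᵏ`, and `P(duration > k) = 3·3⁻ᵏ - 2·9⁻ᵏ`.
Differencing gives `P(duration = m + 1) = 2·3⁻ᵐ - (16/9)·9⁻ᵐ`, and summing two geometric series
gives the generating function. Duration `0` (`sInf ∅`) means the game never ends, an event of
probability `lim P(duration > k) = 0`. -/

section Game

variable {r n : ℕ}

theorem gameState_succ (ω : ℕ → Fin r → Fin n) (k : ℕ) :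
    gameState r n ω (k + 1) = remainingBalls r n (gameState r n ω k) (ω k) := rfl

theorem card_remainingBalls_ne_one (S : Finset (Fin r)) (f : Fin r → Fin n) :
    #(remainingBalls r n S f) ≠ 1 := by
  intro h
  obtain ⟨b, hb⟩ := card_eq_one.mp h
  obtain ⟨hbS, b', hb'S, hne, hcell⟩ := mem_filter.mp (hb ▸ mem_singleton_self b)
  have hb' : b' ∈ remainingBalls r n S f := mem_filter.mpr ⟨hb'S, b, hbS, hne.symm, hcell.symm⟩
  exact hne (mem_singleton.mp (hb ▸ hb'))

theorem card_gameState_ne_one (hr : r ≠ 1) (ω : ℕ → Fin r → Fin n) :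
    ∀ k, #(gameState r n ω k) ≠ 1
  | 0 => by simpa [gameState] using hr
  | _ + 1 => card_remainingBalls_ne_one _ _

theorem gameState_eq_empty_of_le (ω : ℕ → Fin r → Fin n) {j k : ℕ} (hjk : j ≤ k)
    (h : gameState r n ω j = ∅) : gameState r n ω k = ∅ := by
  induction k, hjk using Nat.le_induction with
  | base => exact h
  | succ k _ ih => rw [gameState_succ, ih]; rfl

theorem gameDuration_eq_succ_iff (ω : ℕ → Fin r → Fin n) (m : ℕ) :
    gameDuration r n ω = m + 1 ↔ gameState r n ω m ≠ ∅ ∧ gameState r n ω (m + 1) = ∅ := by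
  rw [gameDuration, Nat.sInf_upward_closed_eq_succ_iff (s := {k | gameState r n ω k = ∅})
    fun _ _ hjk hj => gameState_eq_empty_of_le ω hjk hj]
  exact and_comm

theorem gameDuration_eq_zero_iff [NeZero r] (ω : ℕ → Fin r → Fin n) :
    gameDuration r n ω = 0 ↔ ∀ k, gameState r n ω k ≠ ∅ := by
  simp [gameDuration, Nat.sInf_eq_zero, gameState, univ_nonempty.ne_empty,
    Set.eq_empty_iff_forall_notMem]

end Game

section Rounds

variable {α : Type*} [MeasurableSpace α]

abbrev pastRounds (k : ℕ) : MeasurableSpace (ℕ → α) :=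
  ⨆ j ∈ Set.Iio k, MeasurableSpace.comap (fun ω => ω j) ‹_›

theorem pastRounds_le (k : ℕ) : pastRounds (α := α) k ≤ MeasurableSpace.pi :=
  iSup₂_le fun j _ => (measurable_pi_apply j).comap_le

theorem comap_le_pastRounds {j k : ℕ} (hjk : j < k) :
    MeasurableSpace.comap (fun ω : ℕ → α => ω j) ‹_› ≤ pastRounds k :=
  le_iSup₂ (f := fun j (_ : j ∈ Set.Iio k) => MeasurableSpace.comap (fun ω : ℕ → α => ω j) ‹_›)
    j hjk

theorem pastRounds_mono : Monotone (pastRounds (α := α)) :=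
  fun _ _ h => biSup_mono fun _ hj => lt_of_lt_of_le hj h

variable {μ : Measure (ℕ → α)}

theorem measureReal_inter_round_eq_mul (hindep : iIndepFun (fun k ω => ω k) μ) {k : ℕ}
    {A : Set (ℕ → α)} (hA : MeasurableSet[pastRounds k] A) {E : Set α} (hE : MeasurableSet E) :
    μ.real (A ∩ {ω | ω k ∈ E}) = μ.real A * μ.real {ω | ω k ∈ E} := by
  have hindep_past := indep_iSup_of_disjoint (fun j => (measurable_pi_apply j).comap_le)
    hindep.iIndep (S := Set.Iio k) (Set.disjoint_singleton_right.mpr (lt_irrefl k))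
  rw [_root_.iSup_singleton] at hindep_past
  simp only [measureReal_def, ← ENNReal.toReal_mul]
  exact congrArg ENNReal.toReal ((Indep_iff _ _ μ).1 hindep_past A _ hA ⟨E, hE, rfl⟩)

theorem measureReal_round_mem [IsFiniteMeasure μ] [MeasurableSingletonClass α] {p : ℝ}
    (hunif : ∀ k a, μ.real {ω | ω k = a} = p) (k : ℕ) (E : Finset α) :
    μ.real {ω | ω k ∈ E} = #E * p := by
  have hfib : ∀ a ∈ E, MeasurableSet ((fun ω : ℕ → α => ω k) ⁻¹' {a}) :=
    fun a _ => measurable_pi_apply k (measurableSet_singleton a)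
  calc μ.real {ω | ω k ∈ E} = ∑ a ∈ E, μ.real ((fun ω : ℕ → α => ω k) ⁻¹' {a}) :=
        (sum_measureReal_preimage_singleton E hfib).symm
    _ = #E * p := by simp [Set.preimage, hunif]

end Rounds

theorem integral_pow_eq_tsum {Ω : Type*} [MeasurableSpace Ω] {μ : Measure Ω} [IsFiniteMeasure μ]
    {D : Ω → ℕ} (hD : Measurable D) {x : ℝ} (hx : |x| ≤ 1) :
    ∫ ω, x ^ D ω ∂μ = ∑' m, x ^ m * μ.real {ω | D ω = m} := by
  have hbound : Integrable (fun m : ℕ => x ^ m) (μ.map D) :=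
    .of_bound (measurable_from_nat.aestronglyMeasurable) 1
      (.of_forall fun m => by simpa [abs_pow] using pow_le_one₀ (abs_nonneg x) hx)
  rw [← integral_map hD.aemeasurable measurable_from_nat.aestronglyMeasurable,
    integral_countable hbound]
  congr 1 with m
  rw [map_measureReal_apply hD (measurableSet_singleton m), smul_eq_mul, mul_comm]
  rfl

section GameProbability

variable {r n : ℕ}

theorem setOf_gameState_succ_eq (k : ℕ) (T : Finset (Fin r)) :
    {ω : ℕ → Fin r → Fin n | gameState r n ω (k + 1) = T} =
      ⋃ S, {ω | gameState r n ω k = S} ∩ {ω | ω k ∈ {f | remainingBalls r n S f = T}} := by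
  ext ω
  simp [gameState_succ]

theorem pastRounds_measurableSet_gameState_eq (k : ℕ) (S : Finset (Fin r)) :
    MeasurableSet[pastRounds k] {ω : ℕ → Fin r → Fin n | gameState r n ω k = S} := by
  induction k generalizing S with
  | zero => exact MeasurableSet.const (univ = S)
  | succ k ih =>
    rw [setOf_gameState_succ_eq]
    exact .iUnion fun S' => (pastRounds_mono k.le_succ _ (ih S')).inter
      (comap_le_pastRounds k.lt_succ_self _ ⟨_, (Set.toFinite _).measurableSet, rfl⟩)

theorem measurableSet_gameState_eq (k : ℕ) (S : Finset (Fin r)) :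
    MeasurableSet {ω : ℕ → Fin r → Fin n | gameState r n ω k = S} :=
  pastRounds_le k _ (pastRounds_measurableSet_gameState_eq k S)

theorem measurableSet_gameState_ne_empty (k : ℕ) :
    MeasurableSet {ω : ℕ → Fin r → Fin n | gameState r n ω k ≠ ∅} :=
  (measurableSet_gameState_eq k ∅).compl

theorem measurable_gameDuration [NeZero r] : Measurable (gameDuration r n) := by
  refine measurable_to_countable' fun m => ?_
  cases m with
  | zero =>
    simp only [Set.preimage, Set.mem_singleton_iff, gameDuration_eq_zero_iff, Set.ofPred_forall]
    exact .iInter measurableSet_gameState_ne_empty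
  | succ m =>
    simp only [Set.preimage, Set.mem_singleton_iff, gameDuration_eq_succ_iff, Set.ofPred_and]
    exact (measurableSet_gameState_ne_empty m).inter (measurableSet_gameState_eq (m + 1) ∅)

variable {μ : Measure (ℕ → Fin r → Fin n)} [IsFiniteMeasure μ]

theorem measureReal_gameState_succ_eq (hindep : iIndepFun (fun k ω => ω k) μ) {p : ℝ}
    (hunif : ∀ k f, μ.real {ω | ω k = f} = p) (k : ℕ) (T : Finset (Fin r)) :
    μ.real {ω | gameState r n ω (k + 1) = T} =
      ∑ S, μ.real {ω | gameState r n ω k = S} * #{f | remainingBalls r n S f = T} * p := by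
  rw [setOf_gameState_succ_eq, measureReal_iUnion_fintype]
  · refine sum_congr rfl fun S _ => ?_
    rw [measureReal_inter_round_eq_mul hindep (pastRounds_measurableSet_gameState_eq k S)
      (Set.toFinite _).measurableSet, mul_assoc, ← measureReal_round_mem hunif k]
    simp
  · intro S S' hSS'
    exact Disjoint.mono Set.inter_subset_left Set.inter_subset_left
      (Set.disjoint_left.mpr fun ω hS hS' => hSS' (hS.symm.trans hS'))
  · exact fun S => (measurableSet_gameState_eq k S).inter
      (measurable_pi_apply k (Set.toFinite _).measurableSet)

theorem measureReal_gameDuration_eq_succ (m : ℕ) :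
    μ.real {ω | gameDuration r n ω = m + 1} =
      μ.real {ω | gameState r n ω m ≠ ∅} - μ.real {ω | gameState r n ω (m + 1) ≠ ∅} := by
  have hsub : {ω : ℕ → Fin r → Fin n | gameState r n ω (m + 1) ≠ ∅} ⊆
      {ω | gameState r n ω m ≠ ∅} :=
    fun ω h h' => h (gameState_eq_empty_of_le ω m.le_succ h')
  rw [← measureReal_sdiff hsub (measurableSet_gameState_ne_empty _)]
  congr 1
  ext ω
  simp [gameDuration_eq_succ_iff]

end GameProbability

section ThreeBallsThreeCells

open Filter Topology

theorem card_remainingBalls_eq_univ (S : Finset (Fin 3)) :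
    #{f | remainingBalls 3 3 S f = univ} = if S = univ then 3 else 0 := by
  revert S; decide

theorem card_remainingBalls_eq_of_card_eq_two (S : Finset (Fin 3)) {T : Finset (Fin 3)}
    (hT : #T = 2) :
    #{f | remainingBalls 3 3 S f = T} = (if S = univ then 6 else 0) + (if S = T then 9 else 0) := by
  revert S T; decide

theorem ne_empty_iff_eq_univ_or_eq_compl_singleton {S : Finset (Fin 3)} (hS : #S ≠ 1) :
    S ≠ ∅ ↔ S = univ ∨ ∃ i, S = {i}ᶜ := by
  revert S; decide

variable {μ : Measure (ℕ → Fin 3 → Fin 3)} [IsProbabilityMeasure μ]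
  (hindep : iIndepFun (fun k ω => ω k) μ) (hunif : ∀ k f, μ.real {ω | ω k = f} = 27⁻¹)
include hindep hunif

theorem measureReal_gameState_eq_univ (k : ℕ) :
    μ.real {ω | gameState 3 3 ω k = univ} = 9⁻¹ ^ k := by
  induction k with
  | zero => simp [gameState]
  | succ k ih =>
    simp_rw [measureReal_gameState_succ_eq hindep hunif, card_remainingBalls_eq_univ]
    simp only [Nat.cast_ite, Nat.cast_ofNat, CharP.cast_eq_zero, mul_ite, mul_zero, ite_mul,
      zero_mul, sum_ite_eq', mem_univ, ↓reduceIte, ih]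
    ring

theorem measureReal_gameState_eq_of_card_eq_two {T : Finset (Fin 3)} (hT : #T = 2) (k : ℕ) :
    μ.real {ω | gameState 3 3 ω k = T} = 3⁻¹ ^ k - 9⁻¹ ^ k := by
  induction k with
  | zero =>
    have hT' : univ ≠ T := by rintro rfl; simp at hT
    simp [gameState, hT']
  | succ k ih =>
    simp_rw [measureReal_gameState_succ_eq hindep hunif,
      card_remainingBalls_eq_of_card_eq_two _ hT]
    simp only [Nat.cast_add, Nat.cast_ite, Nat.cast_ofNat, CharP.cast_eq_zero, mul_add, mul_ite,
      mul_zero, add_mul, ite_mul, zero_mul, sum_add_distrib, sum_ite_eq', mem_univ, ↓reduceIte,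
      measureReal_gameState_eq_univ hindep hunif, ih]
    ring

theorem measureReal_gameState_ne_empty (k : ℕ) :
    μ.real {ω | gameState 3 3 ω k ≠ ∅} = 3 * 3⁻¹ ^ k - 2 * 9⁻¹ ^ k := by
  have hsplit : {ω | gameState 3 3 ω k ≠ ∅} =
      {ω | gameState 3 3 ω k = univ} ∪ ⋃ i, {ω | gameState 3 3 ω k = {i}ᶜ} := by
    ext ω
    simp [ne_empty_iff_eq_univ_or_eq_compl_singleton (card_gameState_ne_one (by norm_num) ω k)]
  have hcard : ∀ i : Fin 3, #({i}ᶜ : Finset (Fin 3)) = 2 := by decide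
  rw [hsplit, measureReal_union, measureReal_iUnion_fintype]
  · simp only [measureReal_gameState_eq_univ hindep hunif,
      fun i => measureReal_gameState_eq_of_card_eq_two hindep hunif (hcard i) k, sum_const,
      card_univ, Fintype.card_fin, nsmul_eq_mul, Nat.cast_ofNat]
    ring
  · exact fun i j hij =>
      pairwise_disjoint_fiber _ (compl_injective.ne (singleton_injective.ne hij))
  · exact fun i => measurableSet_gameState_eq k _
  · exact Set.disjoint_iUnion_right.mpr fun i =>
      pairwise_disjoint_fiber _ (by revert i; decide : univ ≠ {i}ᶜ)
  · exact .iUnion fun i => measurableSet_gameState_eq k _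

theorem measureReal_gameDuration_eq_zero : μ.real {ω | gameDuration 3 3 ω = 0} = 0 := by
  have hle : ∀ k, μ.real {ω | gameDuration 3 3 ω = 0} ≤ 3 * 3⁻¹ ^ k - 2 * 9⁻¹ ^ k := fun k =>
    measureReal_gameState_ne_empty hindep hunif k ▸
      measureReal_mono fun ω h => (gameDuration_eq_zero_iff ω).1 h k
  have hlim : Tendsto (fun k : ℕ => 3 * (3⁻¹ : ℝ) ^ k - 2 * 9⁻¹ ^ k) atTop (𝓝 0) := by
    have h3 := tendsto_pow_atTop_nhds_zero_of_lt_one (r := (3 : ℝ)⁻¹) (by norm_num) (by norm_num)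
    have h9 := tendsto_pow_atTop_nhds_zero_of_lt_one (r := (9 : ℝ)⁻¹) (by norm_num) (by norm_num)
    simpa using (h3.const_mul 3).sub (h9.const_mul 2)
  exact le_antisymm (ge_of_tendsto' hlim hle) measureReal_nonneg

theorem hasSum_pow_mul_measureReal_gameDuration {x : ℝ} (hx : |x| < 1) :
    HasSum (fun m => x ^ m * μ.real {ω | gameDuration 3 3 ω = m})
      (2 * x * (5 * x + 3) / ((3 - x) * (9 - x))) := by
  refine (hasSum_nat_add_iff' 1).mp ?_
  have hsucc : ∀ m, x ^ (m + 1) * μ.real {ω | gameDuration 3 3 ω = m + 1} =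
      2 * x * (x / 3) ^ m - 16 * x / 9 * (x / 9) ^ m := by
    intro m
    rw [measureReal_gameDuration_eq_succ, measureReal_gameState_ne_empty hindep hunif,
      measureReal_gameState_ne_empty hindep hunif]
    ring
  simp only [hsucc, range_one, sum_singleton, pow_zero, one_mul,
    measureReal_gameDuration_eq_zero hindep hunif, sub_zero]
  have h3 := hasSum_geometric_of_abs_lt_one (r := x / 3) (by rw [abs_div]; norm_num; linarith)
  have h9 := hasSum_geometric_of_abs_lt_one (r := x / 9) (by rw [abs_div]; norm_num; linarith)
  convert (h3.mul_left (2 * x)).sub (h9.mul_left (16 * x / 9)) using 1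
  obtain ⟨hx₁, hx₂⟩ := abs_lt.mp hx
  have h3x : (3 : ℝ) - x ≠ 0 := by linarith
  have h9x : (9 : ℝ) - x ≠ 0 := by linarith
  field_simp
  ring

end ThreeBallsThreeCells

/-- For the ball-and-cell game with `3` balls and `3` cells (each round every
remaining ball is placed independently uniformly at random into one of the 3 cells and sole
occupants are removed, rounds independent), the probability generating function of the
duration is `F(x) = 2x(5x+3)/((3−x)(9−x))`. -/
theorem ball_cell_three_balls_three_cells_pgf
    (μ : Measure (ℕ → Fin 3 → Fin 3)) [IsProbabilityMeasure μ]
    (hindep : iIndepFun (fun k ω => ω k) μ)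
    (hunif : ∀ (k : ℕ) (g : Fin 3 → Fin 3), μ {ω | ω k = g} = ((3 : ENNReal) ^ 3)⁻¹) :
    ∀ x : ℝ, |x| < 1 →
      ∫ ω, x ^ gameDuration 3 3 ω ∂μ = 2 * x * (5 * x + 3) / ((3 - x) * (9 - x)) := by
  have hunif_real : ∀ k g, μ.real {ω | ω k = g} = 27⁻¹ := fun k g => by
    rw [measureReal_def, hunif]
    norm_num
  intro x hx
  rw [integral_pow_eq_tsum measurable_gameDuration hx.le,
    (hasSum_pow_mul_measureReal_gameDuration hindep hunif_real hx).tsum_eq]
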